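/- arXiv:2401.02057 — 6 statements merged into one kernel-verified Lean document; each statement's English description precedes it below -/
import Mathlib

section
/- Let p be a prime, m and d natural numbers, and let k = (k_1,…,k_d), k' = (k'_1,…,k'_d) ∈ ℕ^d with k'_i ≤ k_i for all i. Then the product ∏_{i=1}^{d} {k_i choose k'_i}_{(m),q}, a priori an element of ℚ(q), lies in the subring ℤ[q] (i.e., it is a polynomial with integer coefficients). -/
/-!
In `ℤ[q]` one has `(r)_{q^a}! (s)_{q^a}! ∣ (r+s)_{q^a}!`: the `q`-Pascal identity
`(r+s+2)_{q^a} = (r+1)_{q^a} + q^{a(r+1)} (s+1)_{q^a}` splits `(r+s+2)_{q^a}!` into two terms,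
each divisible by `(r+1)_{q^a}! (s+1)_{q^a}!` by induction. As
`⌊k'/p^m⌋ + ⌊(k-k')/p^m⌋ ≤ ⌊k/p^m⌋`, the denominator of each `{k_i choose k'_i}_{(m),q}`
therefore divides its numerator.
-/

noncomputable section

open Polynomial

/-- `ℤ[q]`, the polynomial ring in one variable `q` over `ℤ`. -/
abbrev Zq : Type := Polynomial ℤ

/-- `ℚ(q)`, realized as the fraction field of `ℤ[q]`. -/
abbrev Qq : Type := FractionRing Zq

/-- The canonical embedding `ℤ[q] → ℚ(q)`. -/
def ι : Zq →+* Qq := algebraMap Zq Qq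

/-- The image of the variable `q` in `ℚ(q)`. -/
def qQ : Qq := ι X

/-- The `q^a`-integer `(n)_{q^a} = 1 + q^a + ⋯ + q^{a(n-1)}` in `ℤ[q]`. -/
def qInt (a n : ℕ) : Zq := ∑ j ∈ Finset.range n, X ^ (a * j)

/-- The `q^a`-factorial `(n)_{q^a}! = ∏_{i=1}^{n} (i)_{q^a}` in `ℤ[q]`. -/
def qFact (a n : ℕ) : Zq := ∏ i ∈ Finset.range n, qInt a (i + 1)

/-- The prime ideal `(p, q - 1)` of `ℤ[q]`. -/
def pqIdeal (p : ℕ) : Ideal Zq := Ideal.span {C (p : ℤ), X - 1}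

/-- Membership in the localization `ℤ[q]_{(p,q-1)}`, viewed inside `ℚ(q)`:
`x = a / b` with `b ∉ (p, q-1)`. -/
def InLoc (p : ℕ) (x : Qq) : Prop :=
  ∃ a b : Zq, b ∉ pqIdeal p ∧ x * ι b = ι a

/-- Being a unit of the localization `ℤ[q]_{(p,q-1)}`, viewed inside `ℚ(q)`:
`x = a / b` with `a, b ∉ (p, q-1)`. -/
def IsLocUnit (p : ℕ) (x : Qq) : Prop :=
  ∃ a b : Zq, a ∉ pqIdeal p ∧ b ∉ pqIdeal p ∧ x * ι b = ι a

/-- The Gaussian `q`-binomial coefficient `(k choose k')_q` as an element of `ℚ(q)`. -/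
def qBinomF (k k' : ℕ) : Qq :=
  ι (qFact 1 k) / (ι (qFact 1 k') * ι (qFact 1 (k - k')))

/-- The level-`m` coefficient `{k choose k'}_{(m),q}` as an element of `ℚ(q)`. -/
def braceC (p m k k' : ℕ) : Qq :=
  ι (qFact (p ^ m) (k / p ^ m)) /
    (ι (qFact (p ^ m) (k' / p ^ m)) * ι (qFact (p ^ m) ((k - k') / p ^ m)))

/-- The level-`m` coefficient `⟨k choose k'⟩_{(m),q}` as an element of `ℚ(q)`. -/
def angleC (p m k k' : ℕ) : Qq := qBinomF k k' * (braceC p m k k')⁻¹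

theorem map_div_mem_range_of_dvd {R K : Type*} [Ring R] [Field K] (φ : R →+* K)
    {a b : R} (h : b ∣ a) : φ a / φ b ∈ φ.range := by
  obtain ⟨c, rfl⟩ := h
  by_cases hb : φ b = 0
  · exact ⟨0, by simp [hb]⟩
  · exact ⟨c, by rw [map_mul, mul_div_cancel_left₀ _ hb]⟩

theorem qInt_add (a m n : ℕ) : qInt a (m + n) = qInt a m + X ^ (a * m) * qInt a n := by
  simp only [qInt, Finset.sum_range_add, Finset.mul_sum, mul_add, pow_add]

theorem qFact_succ (a n : ℕ) : qFact a (n + 1) = qFact a n * qInt a (n + 1) :=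
  Finset.prod_range_succ _ n

theorem qFact_dvd_qFact (a : ℕ) {m n : ℕ} (h : m ≤ n) : qFact a m ∣ qFact a n :=
  Finset.prod_dvd_prod_of_subset _ _ _ (Finset.range_subset_range.2 h)

theorem qFact_mul_qFact_dvd (a : ℕ) : ∀ r s, qFact a r * qFact a s ∣ qFact a (r + s)
  | 0, s => by simp [qFact]
  | r + 1, 0 => by simp [qFact]
  | r + 1, s + 1 => by
    have hr : qFact a r * qFact a (s + 1) ∣ qFact a (r + s + 1) := qFact_mul_qFact_dvd a r (s + 1)
    have hs : qFact a (r + 1) * qFact a s ∣ qFact a (r + s + 1) := by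
      simpa only [Nat.add_right_comm] using qFact_mul_qFact_dvd a (r + 1) s
    have hsplit : qFact a (r + 1 + (s + 1)) = qFact a (r + s + 1) * qInt a (r + 1) +
        X ^ (a * (r + 1)) * (qFact a (r + s + 1) * qInt a (s + 1)) := by
      rw [show r + 1 + (s + 1) = r + s + 1 + 1 by omega, qFact_succ,
        show r + s + 1 + 1 = r + 1 + (s + 1) by omega, qInt_add]
      ring
    rw [hsplit]
    refine dvd_add ?_ (dvd_mul_of_dvd_right ?_ _)
    · rw [qFact_succ a r, mul_right_comm]
      exact mul_dvd_mul_right hr _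
    · rw [qFact_succ a s, ← mul_assoc]
      exact mul_dvd_mul_right hs _

theorem braceC_mem_range (p m : ℕ) {k k' : ℕ} (h : k' ≤ k) : braceC p m k k' ∈ ι.range := by
  rw [braceC, ← map_mul]
  refine map_div_mem_range_of_dvd ι ((qFact_mul_qFact_dvd _ _ _).trans (qFact_dvd_qFact _ ?_))
  calc k' / p ^ m + (k - k') / p ^ m ≤ (k' + (k - k')) / p ^ m := Nat.div_add_div_le_add_div
    _ = k / p ^ m := by rw [Nat.add_sub_cancel' h]

theorem stmt1_general (p : ℕ) (m d : ℕ) (k k' : Fin d → ℕ)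
    (h : ∀ i, k' i ≤ k i) :
    ∃ f : Zq, (∏ i, braceC p m (k i) (k' i)) = ι f := by
  obtain ⟨f, hf⟩ := Subring.prod_mem ι.range fun i _ => braceC_mem_range p m (h i)
  exact ⟨f, hf.symm⟩

/-- For multi-indices `k' ≤ k`, the product of the level-`m` coefficients
`{k_i choose k'_i}_{(m),q}` lies in `ℤ[q]`. -/
theorem stmt1 (p : ℕ) (hp : p.Prime) (m d : ℕ) (k k' : Fin d → ℕ)
    (h : ∀ i, k' i ≤ k i) :
    ∃ f : Zq, (∏ i, braceC p m (k i) (k' i)) = ι f :=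
  stmt1_general p m d k k' h
end
end

section
/- Let p be a prime and m a natural number. Let r ∈ ℕ and let s be an integer with 0 < s < p^m. Then there exists a unit u of the localization ℤ[q]_{(p,q−1)} such that (p^m r + s)_q = u · (s)_q holds in ℤ[q]_{(p,q−1)}. -/
noncomputable section

open Polynomial

/-! Write `s = p^v t` with `p ∤ t`; then `v < m` and `p^m r + s = p^v T` with
`T = p^(m-v) r + t`, again prime to `p`. Since `(a t)_q = (t)_{q^a} (a)_q`, the ratio
`(p^v T)_q / (p^v t)_q` is `(T)_{q^{p^v}} / (t)_{q^{p^v}}`, and both of these lie outside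
`(p, q - 1)` because their values at `q = 1` are `T` and `t`. -/

lemma qInt_eval_one (a n : ℕ) : (qInt a n).eval 1 = n := by
  simp [qInt, eval_finsetSum]

lemma qInt_mul_X_pow_sub_one (a n : ℕ) : qInt a n * (X ^ a - 1) = X ^ (a * n) - 1 := by
  simp only [qInt, pow_mul]
  exact geom_sum_mul _ _

lemma qInt_one_mul (a t : ℕ) : qInt 1 (a * t) = qInt a t * qInt 1 a := by
  refine mul_right_cancel₀ (X_sub_C_ne_zero (1 : ℤ)) ?_
  have h1 := qInt_mul_X_pow_sub_one 1 (a * t)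
  have h2 := qInt_mul_X_pow_sub_one 1 a
  simp only [pow_one, one_mul] at h1 h2
  rw [C_1, h1, mul_assoc, h2, qInt_mul_X_pow_sub_one]

lemma notMem_pqIdeal_of_not_dvd_eval_one {p : ℕ} {x : Zq} (hx : ¬ (p : ℤ) ∣ x.eval 1) :
    x ∉ pqIdeal p := by
  rw [pqIdeal, Ideal.mem_span_pair]
  rintro ⟨u, v, rfl⟩
  simp at hx

lemma qInt_notMem_pqIdeal {p n : ℕ} (a : ℕ) (hn : ¬ p ∣ n) : qInt a n ∉ pqIdeal p :=
  notMem_pqIdeal_of_not_dvd_eval_one (by rwa [qInt_eval_one, Int.natCast_dvd_natCast])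

lemma ι_ne_zero_of_notMem_pqIdeal {p : ℕ} {b : Zq} (hb : b ∉ pqIdeal p) : ι b ≠ 0 :=
  (map_ne_zero_iff ι (IsFractionRing.injective Zq Qq)).mpr
    fun h ↦ hb (h ▸ (pqIdeal p).zero_mem)

lemma isLocUnit_div {p : ℕ} {a b : Zq} (ha : a ∉ pqIdeal p) (hb : b ∉ pqIdeal p) :
    IsLocUnit p (ι a / ι b) :=
  ⟨a, b, ha, hb, div_mul_cancel₀ _ (ι_ne_zero_of_notMem_pqIdeal hb)⟩

lemma ι_qInt_one_mul_eq_div_mul {a t : ℕ} (T : ℕ) (ht : ι (qInt a t) ≠ 0) :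
    ι (qInt 1 (a * T)) = ι (qInt a T) / ι (qInt a t) * ι (qInt 1 (a * t)) := by
  rw [qInt_one_mul, qInt_one_mul, map_mul, map_mul, ← mul_assoc, div_mul_cancel₀ _ ht]

lemma exists_pow_mul_add_eq_pow_mul_not_dvd {p m v t : ℕ} (r : ℕ) (hvm : v < m)
    (ht : ¬ p ∣ t) : ∃ T, p ^ m * r + p ^ v * t = p ^ v * T ∧ ¬ p ∣ T := by
  refine ⟨p ^ (m - v) * r + t, ?_, ?_⟩
  · rw [mul_add, ← mul_assoc, ← pow_add, Nat.add_sub_cancel' hvm.le]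
  · exact (Nat.dvd_add_right (dvd_mul_of_dvd_left (dvd_pow_self p (by omega)) r)).not.mpr ht

theorem stmt3_general (p : ℕ) (m r s : ℕ) (hs : 0 < s) (hs' : s < p ^ m) :
    ∃ u : Qq, IsLocUnit p u ∧ ι (qInt 1 (p ^ m * r + s)) = u * ι (qInt 1 s) := by
  have hp : 1 < p := by
    by_contra! hp
    have := pow_le_one₀ (n := m) p.zero_le hp
    omega
  obtain ⟨v, t, ht, rfl⟩ := Nat.exists_eq_pow_mul_and_not_dvd hs.ne' p hp.ne'
  have hvm : v < m :=
    (Nat.pow_lt_pow_iff_right hp).mp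
      ((Nat.le_mul_of_pos_right _ (Nat.pos_of_mul_pos_left hs)).trans_lt hs')
  obtain ⟨T, hN, hT⟩ := exists_pow_mul_add_eq_pow_mul_not_dvd r hvm ht
  have ht' := qInt_notMem_pqIdeal (p ^ v) ht
  refine ⟨_, isLocUnit_div (qInt_notMem_pqIdeal (p ^ v) hT) ht', ?_⟩
  rw [hN]
  exact ι_qInt_one_mul_eq_div_mul T (ι_ne_zero_of_notMem_pqIdeal ht')

/-- For `0 < s < p^m`, one has `(p^m r + s)_q = u ⬝ (s)_q` for a unit `u` of
`ℤ[q]_{(p,q-1)}`. -/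
theorem stmt3 (p : ℕ) (hp : p.Prime) (m r s : ℕ) (hs : 0 < s) (hs' : s < p ^ m) :
    ∃ u : Qq, IsLocUnit p u ∧ ι (qInt 1 (p ^ m * r + s)) = u * ι (qInt 1 s) :=
  stmt3_general p m r s hs hs'
end
end

section
/- Let p be a prime and m a natural number. For every natural number k, the element (k)_q! / (⌊k/p^m⌋)_{q^{p^m}}! of ℚ(q) lies in the subring ℤ[q], i.e., the q^{p^m}-factorial (⌊k/p^m⌋)_{q^{p^m}}! divides the q-factorial (k)_q! in ℤ[q]. -/
noncomputable section

open Polynomial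

lemma qInt_mul (a i : ℕ) : qInt 1 (a * i) = qInt a i * qInt 1 a := by
  induction i with
  | zero => simp [qInt]
  | succ n ih =>
    rw [Nat.mul_succ, qInt, Finset.sum_range_add, ← qInt, ih]
    have h2 : ∑ j ∈ Finset.range a, X ^ (1 * (a * n + j))
        = (X : Zq) ^ (a * n) * qInt 1 a := by
      rw [qInt, Finset.mul_sum]
      refine Finset.sum_congr rfl fun j _ => ?_
      rw [← pow_add]; ring_nf
    have h3 : qInt a (n + 1) = qInt a n + X ^ (a * n) := by
      rw [qInt, qInt, Finset.sum_range_succ]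
    rw [h2, h3]
    ring

lemma qFact_div_dvd (a k : ℕ) (ha : 0 < a) : qFact a (k / a) ∣ qFact 1 k := by
  have h1 : qFact a (k / a) ∣ ∏ i ∈ Finset.range (k / a), qInt 1 (a * (i + 1)) := by
    apply Finset.prod_dvd_prod_of_dvd
    intro i _
    rw [qInt_mul]
    exact Dvd.intro _ rfl
  refine h1.trans ?_
  have hinj : ∀ x ∈ Finset.range (k / a), ∀ y ∈ Finset.range (k / a),
      a * (x + 1) - 1 = a * (y + 1) - 1 → x = y := by
    intro x _ y _ h
    have hx : 1 ≤ a * (x + 1) := Nat.one_le_iff_ne_zero.mpr (Nat.mul_ne_zero ha.ne' (Nat.succ_ne_zero x))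
    have hy : 1 ≤ a * (y + 1) := Nat.one_le_iff_ne_zero.mpr (Nat.mul_ne_zero ha.ne' (Nat.succ_ne_zero y))
    have heq : a * (x + 1) = a * (y + 1) := by omega
    have := Nat.eq_of_mul_eq_mul_left ha heq
    omega
  have key : ∏ i ∈ Finset.range (k / a), qInt 1 (a * (i + 1))
      = ∏ j ∈ (Finset.range (k / a)).image (fun i => a * (i + 1) - 1), qInt 1 (j + 1) := by
    rw [Finset.prod_image hinj]
    refine Finset.prod_congr rfl fun i _ => ?_
    have hx : 1 ≤ a * (i + 1) := Nat.one_le_iff_ne_zero.mpr (Nat.mul_ne_zero ha.ne' (Nat.succ_ne_zero i))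
    congr 1
    omega
  rw [key]
  apply Finset.prod_dvd_prod_of_subset
  intro j hj
  simp only [Finset.mem_image, Finset.mem_range] at hj ⊢
  obtain ⟨i, hi, rfl⟩ := hj
  have hle : a * (i + 1) ≤ a * (k / a) := Nat.mul_le_mul_left a hi
  have h2 : a * (k / a) ≤ k := by rw [mul_comm]; exact Nat.div_mul_le_self k a
  have hx : 1 ≤ a * (i + 1) := Nat.one_le_iff_ne_zero.mpr (Nat.mul_ne_zero ha.ne' (Nat.succ_ne_zero i))
  omega

/-- The `q^{p^m}`-factorial `(⌊k/p^m⌋)_{q^{p^m}}!` divides the `q`-factorial `(k)_q!`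
in `ℤ[q]`. -/
theorem stmt5 (p : ℕ) (hp : p.Prime) (m k : ℕ) :
    qFact (p ^ m) (k / p ^ m) ∣ qFact 1 k :=
  qFact_div_dvd _ _ (pow_pos hp.pos m)
end
end

section
/- Let p be a prime, m ∈ ℕ, n a positive integer, and v ∈ ℕ. In the polynomial ring ℤ[q][x, ξ] the following congruence holds: ∏_{u=0}^{p^n−1} ((ξ+x)^{p^m} − q^{u p^m + v p^{m+n}} · x^{p^m}) ≡ ∏_{j=0}^{p^{m+n}−1} (ξ + x − q^j x) modulo the ideal generated by the q^{p^{m+n−1}}-integer (p)_{q^{p^{m+n−1}}} = 1 + q^{p^{m+n−1}} + ⋯ + q^{(p−1)p^{m+n−1}}. -/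
noncomputable section

open Polynomial

private lemma qInt_mul_geom (a b : ℕ) : qInt a b * ((X : Zq) ^ a - 1) = X ^ (a * b) - 1 := by
  have h := geom_sum_mul ((X : Zq) ^ a) b
  simpa [qInt, pow_mul] using h

private lemma prim_prod {R : Type*} [CommRing R] [IsDomain R] {ζ : R} {k : ℕ}
    (hk : 0 < k) (hζ : IsPrimitiveRoot ζ k) (x y : R) :
    x ^ k - y ^ k = ∏ w ∈ Finset.range k, (x - ζ ^ w * y) := by
  haveI : NeZero k := ⟨hk.ne'⟩
  classical
  rw [hζ.pow_sub_pow_eq_prod_sub_mul x y hk]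
  have himg : nthRootsFinset k (1 : R) = (Finset.range k).image (ζ ^ ·) := by
    ext a
    simp only [Polynomial.mem_nthRootsFinset hk, Finset.mem_image, Finset.mem_range]
    constructor
    · intro ha
      obtain ⟨i, hik, rfl⟩ := hζ.eq_pow_of_pow_eq_one ha
      exact ⟨i, hik, rfl⟩
    · rintro ⟨i, _, rfl⟩
      rw [← pow_mul, mul_comm, pow_mul, hζ.pow_eq_one, one_pow]
  rw [himg, Finset.prod_image]
  intro i hi j hj h
  exact hζ.pow_inj (Finset.mem_range.1 hi) (Finset.mem_range.1 hj) h

private lemma prod_range_mul_group {M : Type*} [CommMonoid M] (a : ℕ) (f : ℕ → M) :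
    ∀ b : ℕ, ∏ i ∈ Finset.range (a * b), f i
      = ∏ u ∈ Finset.range a, ∏ w ∈ Finset.range b, f (u + w * a)
  | 0 => by simp
  | (b+1) => by
      rw [Nat.mul_succ, Finset.prod_range_add, prod_range_mul_group a f b]
      simp only [Finset.prod_range_succ, Finset.prod_mul_distrib]
      congr 1
      exact Finset.prod_congr rfl fun u _ => by ring_nf

private lemma dvd_prod_sub_prod {R : Type*} [CommRing R] {d : R} (s : Finset ℕ)
    (a b : ℕ → R) (h : ∀ u ∈ s, d ∣ a u - b u) :
    d ∣ (∏ u ∈ s, a u) - ∏ u ∈ s, b u := by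
  classical
  induction s using Finset.induction_on with
  | empty => simp
  | @insert x s hx ih =>
      rw [Finset.prod_insert hx, Finset.prod_insert hx]
      have h1 : d ∣ a x - b x := h x (Finset.mem_insert_self x s)
      have h2 : d ∣ (∏ u ∈ s, a u) - ∏ u ∈ s, b u := ih fun u hu => h u (Finset.mem_insert_of_mem hu)
      have : a x * ∏ u ∈ s, a u - b x * ∏ u ∈ s, b u
          = a x * ((∏ u ∈ s, a u) - ∏ u ∈ s, b u) + (a x - b x) * ∏ u ∈ s, b u := by ring
      rw [this]
      exact dvd_add (Dvd.dvd.mul_left h2 _) (Dvd.dvd.mul_right h1 _)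

private lemma core_dvd (p : ℕ) (hp : p.Prime) :
    (C (Polynomial.C (qInt 1 p)) : Polynomial (Polynomial Zq)) ∣
      (∏ w ∈ Finset.range p,
          ((X : Polynomial (Polynomial Zq)) - C (Polynomial.C ((X : Zq) ^ w) * Polynomial.X)))
        - (X ^ p - C ((Polynomial.X : Polynomial Zq) ^ p)) := by
  have hq : qInt 1 p = Polynomial.cyclotomic p ℤ := by
    haveI := Fact.mk hp
    rw [Polynomial.cyclotomic_prime]; simp [qInt]
  set Φ : Zq := Polynomial.cyclotomic p ℤ with hΦ
  have hirr : Irreducible Φ := Polynomial.cyclotomic.irreducible hp.pos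
  have hprime : Prime Φ := hirr.prime
  set I : Ideal Zq := Ideal.span {Φ} with hI
  haveI : I.IsPrime := (Ideal.span_singleton_prime hprime.ne_zero).2 hprime
  haveI : IsDomain (Zq ⧸ I) := Ideal.Quotient.isDomain I
  letI : CommRing (Polynomial (Zq ⧸ I)) := @Polynomial.commRing _ inferInstance
  letI : CommRing (Polynomial (Polynomial (Zq ⧸ I))) := @Polynomial.commRing _ Polynomial.commRing
  set μ : Zq →+* Zq ⧸ I := Ideal.Quotient.mk I with hμ
  set ζ : Zq ⧸ I := μ X with hζdef
  -- p ≠ 0 in the quotient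
  haveI hNZ : NeZero ((p : ℕ) : Zq ⧸ I) := by
    constructor
    intro h0
    have hmem : ((p : ℕ) : Zq) ∈ I := by
      rw [← Ideal.Quotient.eq_zero_iff_mem]
      rw [show (Ideal.Quotient.mk I) ((p : ℕ) : Zq) = ((p : ℕ) : Zq ⧸ I) from map_natCast _ p]
      exact h0
    rw [hI, Ideal.mem_span_singleton] at hmem
    have hpne : ((p : ℕ) : Zq) ≠ 0 := by
      exact_mod_cast Nat.cast_ne_zero.2 hp.ne_zero
    have hdeg := Polynomial.natDegree_le_of_dvd hmem hpne
    rw [Polynomial.natDegree_cyclotomic, Polynomial.natDegree_natCast, Nat.totient_prime hp] at hdeg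
    have := hp.two_le
    omega
  -- ζ is a primitive p-th root of unity
  have hζprim : IsPrimitiveRoot ζ p := by
    rw [← Polynomial.isRoot_cyclotomic_iff (R := Zq ⧸ I) (n := p)]
    have hmap : Polynomial.cyclotomic p (Zq ⧸ I) = Polynomial.map (Int.castRingHom (Zq ⧸ I)) Φ :=
      (Polynomial.map_cyclotomic_int p _).symm
    rw [Polynomial.IsRoot, hmap, Polynomial.eval_map]
    have hcomp : (Int.castRingHom (Zq ⧸ I)) = μ.comp (Polynomial.C : ℤ →+* Zq) :=
      Subsingleton.elim _ _
    rw [hcomp, ← Polynomial.hom_eval₂ Φ Polynomial.C μ X, Polynomial.eval₂_C_X]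
    exact Ideal.Quotient.eq_zero_iff_mem.2 (Ideal.subset_span rfl)
  -- the key identity after mapping to the quotient
  have hζ2 : IsPrimitiveRoot (Polynomial.C (Polynomial.C ζ) : Polynomial (Polynomial (Zq ⧸ I))) p :=
    (hζprim.map_of_injective (f := (Polynomial.C : (Zq ⧸ I) →+* Polynomial (Zq ⧸ I)))
        Polynomial.C_injective).map_of_injective
      (f := (Polynomial.C : Polynomial (Zq ⧸ I) →+* Polynomial (Polynomial (Zq ⧸ I))))
      Polynomial.C_injective
  set M : Polynomial (Polynomial Zq) →+* Polynomial (Polynomial (Zq ⧸ I)) :=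
    Polynomial.mapRingHom (Polynomial.mapRingHom μ) with hM
  have hMD : M ((∏ w ∈ Finset.range p,
          ((X : Polynomial (Polynomial Zq)) - C (Polynomial.C ((X : Zq) ^ w) * Polynomial.X)))
        - (X ^ p - C ((Polynomial.X : Polynomial Zq) ^ p))) = 0 := by
    rw [hM]
    simp only [Polynomial.coe_mapRingHom, Polynomial.map_sub, Polynomial.map_prod,
      Polynomial.map_pow, Polynomial.map_X, Polynomial.map_C, Polynomial.map_mul]
    rw [sub_eq_zero]
    have hbody : ∀ x : ℕ, (Polynomial.C (Polynomial.C (μ ((Polynomial.X : Zq) ^ x)) * Polynomial.X)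
        : Polynomial (Polynomial (Zq ⧸ I)))
        = (Polynomial.C (Polynomial.C ζ)) ^ x * Polynomial.C Polynomial.X := by
      intro x
      simp [map_mul, map_pow, hζdef]
    rw [Finset.prod_congr rfl fun x _ => by rw [hbody x]]
    rw [show (C ((Polynomial.X : Polynomial (Zq ⧸ I)) ^ p)) = (C (Polynomial.X : Polynomial (Zq ⧸ I))) ^ p from map_pow _ _ _]
    exact (prim_prod hp.pos hζ2 X (C Polynomial.X)).symm
  rw [hq, Polynomial.C_dvd_iff_dvd_coeff]
  intro i
  rw [Polynomial.C_dvd_iff_dvd_coeff]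
  intro j
  rw [← Ideal.mem_span_singleton, ← hI, ← Ideal.Quotient.eq_zero_iff_mem]
  have hc := congrArg (fun f => Polynomial.coeff (Polynomial.coeff f i) j) hMD
  simp only [hM, Polynomial.coe_mapRingHom, Polynomial.coeff_map, Polynomial.coeff_zero] at hc
  exact hc

private lemma step_dvd (p : ℕ) (hp : p.Prime) (m N e : ℕ) :
    (C (Polynomial.C (qInt (p ^ N) p)) : Polynomial (Polynomial Zq)) ∣
      (∏ w ∈ Finset.range p,
          (((X : Polynomial (Polynomial Zq)) + C Polynomial.X) ^ p ^ m -
            C (Polynomial.C ((X : Zq) ^ (e + w * p ^ N)) * Polynomial.X ^ p ^ m)))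
        - (((X : Polynomial (Polynomial Zq)) + C Polynomial.X) ^ p ^ (m + 1) -
            C (Polynomial.C ((X : Zq) ^ (e * p)) * Polynomial.X ^ p ^ (m + 1))) := by
  classical
  set σ : Zq →+* Zq := Polynomial.eval₂RingHom (Polynomial.C : ℤ →+* Zq) ((X : Zq) ^ p ^ N) with hσ
  set τ : Polynomial Zq →+* Polynomial Zq :=
    Polynomial.eval₂RingHom ((Polynomial.C : Zq →+* Polynomial Zq).comp σ)
      (Polynomial.C ((X : Zq) ^ e) * Polynomial.X ^ p ^ m) with hτ
  set φ : Polynomial (Polynomial Zq) →+* Polynomial (Polynomial Zq) :=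
    Polynomial.eval₂RingHom ((C : Polynomial Zq →+* Polynomial (Polynomial Zq)).comp τ)
      (((X : Polynomial (Polynomial Zq)) + C Polynomial.X) ^ p ^ m) with hφ
  have hσX : ∀ k : ℕ, σ ((X : Zq) ^ k) = X ^ (p ^ N * k) := by
    intro k
    rw [hσ]
    simp [Polynomial.eval₂_pow, ← pow_mul]
  -- image of the divisor
  have h0 : φ (C (Polynomial.C (qInt 1 p))) = C (Polynomial.C (qInt (p ^ N) p)) := by
    rw [hφ]
    rw [Polynomial.coe_eval₂RingHom, Polynomial.eval₂_C, RingHom.comp_apply, hτ,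
      Polynomial.coe_eval₂RingHom, Polynomial.eval₂_C, RingHom.comp_apply]
    congr 1
    congr 1
    simp only [qInt, map_sum, hσX, one_mul]
  -- image of the product terms
  have hterm : ∀ w : ℕ,
      φ ((X : Polynomial (Polynomial Zq)) - C (Polynomial.C ((X : Zq) ^ w) * Polynomial.X))
        = ((X : Polynomial (Polynomial Zq)) + C Polynomial.X) ^ p ^ m -
            C (Polynomial.C ((X : Zq) ^ (e + w * p ^ N)) * Polynomial.X ^ p ^ m) := by
    intro w
    rw [map_sub φ (X : Polynomial (Polynomial Zq)) (C (Polynomial.C ((X : Zq) ^ w) * Polynomial.X))]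
    have h1 : φ (X : Polynomial (Polynomial Zq)) = (X + C Polynomial.X) ^ p ^ m := by
      rw [hφ, Polynomial.coe_eval₂RingHom, Polynomial.eval₂_X]
    have h2 : φ (C (Polynomial.C ((X : Zq) ^ w) * Polynomial.X)) =
        C (Polynomial.C ((X : Zq) ^ (e + w * p ^ N)) * Polynomial.X ^ p ^ m) := by
      rw [hφ, Polynomial.coe_eval₂RingHom, Polynomial.eval₂_C, RingHom.comp_apply, hτ,
        Polynomial.coe_eval₂RingHom, Polynomial.eval₂_mul, Polynomial.eval₂_C, Polynomial.eval₂_X,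
        RingHom.comp_apply, hσX]
      refine congrArg C ?_
      rw [← mul_assoc, ← Polynomial.C_mul, ← pow_add]
      congr 3
      ring
    rw [h1, h2]
  -- image of the RHS
  have hrhs : φ ((X : Polynomial (Polynomial Zq)) ^ p - C ((Polynomial.X : Polynomial Zq) ^ p))
      = ((X : Polynomial (Polynomial Zq)) + C Polynomial.X) ^ p ^ (m + 1) -
          C (Polynomial.C ((X : Zq) ^ (e * p)) * Polynomial.X ^ p ^ (m + 1)) := by
    rw [map_sub φ ((X : Polynomial (Polynomial Zq)) ^ p) (C ((Polynomial.X : Polynomial Zq) ^ p))]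
    have h1 : φ ((X : Polynomial (Polynomial Zq)) ^ p) = (X + C Polynomial.X) ^ p ^ (m + 1) := by
      rw [map_pow, hφ, Polynomial.coe_eval₂RingHom, Polynomial.eval₂_X, ← pow_mul, ← pow_succ]
    have h2 : φ (C ((Polynomial.X : Polynomial Zq) ^ p)) =
        C (Polynomial.C ((X : Zq) ^ (e * p)) * Polynomial.X ^ p ^ (m + 1)) := by
      rw [hφ, Polynomial.coe_eval₂RingHom, Polynomial.eval₂_C, RingHom.comp_apply, map_pow, hτ,
        Polynomial.coe_eval₂RingHom, Polynomial.eval₂_X]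
      refine congrArg C ?_
      rw [mul_pow, ← Polynomial.C_pow, ← pow_mul, ← pow_mul, ← pow_succ]
    rw [h1, h2]
  have hd := map_dvd φ (core_dvd p hp)
  rw [h0] at hd
  rw [map_sub φ (∏ w ∈ Finset.range p,
      ((X : Polynomial (Polynomial Zq)) - C (Polynomial.C ((X : Zq) ^ w) * Polynomial.X)))
    ((X : Polynomial (Polynomial Zq)) ^ p - C ((Polynomial.X : Polynomial Zq) ^ p))] at hd
  rw [map_prod, hrhs] at hd
  rwa [Finset.prod_congr rfl fun w _ => hterm w] at hd

private lemma main_ind (p : ℕ) (hp : p.Prime) :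
    ∀ m n : ℕ, 0 < n →
    (C (Polynomial.C (qInt (p ^ (m + n - 1)) p)) : Polynomial (Polynomial Zq)) ∣
      (∏ u ∈ Finset.range (p ^ n),
        (((X : Polynomial (Polynomial Zq)) + C Polynomial.X) ^ p ^ m -
          C (Polynomial.C ((X : Zq) ^ (u * p ^ m)) * Polynomial.X ^ p ^ m)))
      - (∏ j ∈ Finset.range (p ^ (m + n)),
          ((X : Polynomial (Polynomial Zq)) + C Polynomial.X -
            C (Polynomial.C ((X : Zq) ^ j) * Polynomial.X))) := by
  intro m
  induction m with
  | zero =>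
      intro n hn
      have : (∏ u ∈ Finset.range (p ^ n),
          (((X : Polynomial (Polynomial Zq)) + C Polynomial.X) ^ p ^ 0 -
            C (Polynomial.C ((X : Zq) ^ (u * p ^ 0)) * Polynomial.X ^ p ^ 0)))
          = ∏ j ∈ Finset.range (p ^ (0 + n)),
            ((X : Polynomial (Polynomial Zq)) + C Polynomial.X -
              C (Polynomial.C ((X : Zq) ^ j) * Polynomial.X)) := by
        rw [Nat.zero_add]
        exact Finset.prod_congr rfl fun u _ => by simp
      rw [this]
      exact ⟨0, by ring⟩
  | succ m ih =>
      intro n hn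
      -- A := grouped product at level m over p^(n+1); B := product at level m+1 over p^n
      have key : (C (Polynomial.C (qInt (p ^ (m + 1 + n - 1)) p)) : Polynomial (Polynomial Zq)) ∣
          (∏ u ∈ Finset.range (p ^ n),
            (((X : Polynomial (Polynomial Zq)) + C Polynomial.X) ^ p ^ (m + 1) -
              C (Polynomial.C ((X : Zq) ^ (u * p ^ (m + 1))) * Polynomial.X ^ p ^ (m + 1))))
          - (∏ u ∈ Finset.range (p ^ (n + 1)),
            (((X : Polynomial (Polynomial Zq)) + C Polynomial.X) ^ p ^ m -
              C (Polynomial.C ((X : Zq) ^ (u * p ^ m)) * Polynomial.X ^ p ^ m))) := by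
        have hsplit : (∏ u ∈ Finset.range (p ^ (n + 1)),
            (((X : Polynomial (Polynomial Zq)) + C Polynomial.X) ^ p ^ m -
              C (Polynomial.C ((X : Zq) ^ (u * p ^ m)) * Polynomial.X ^ p ^ m)))
            = ∏ u ∈ Finset.range (p ^ n), ∏ w ∈ Finset.range p,
              (((X : Polynomial (Polynomial Zq)) + C Polynomial.X) ^ p ^ m -
                C (Polynomial.C ((X : Zq) ^ ((u + w * p ^ n) * p ^ m)) * Polynomial.X ^ p ^ m)) := by
          rw [show p ^ (n + 1) = p ^ n * p from pow_succ p n]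
          exact prod_range_mul_group (p ^ n) _ p
        rw [hsplit]
        have hMN : m + 1 + n - 1 = m + n := by omega
        rw [hMN]
        refine dvd_prod_sub_prod _ _ _ ?_
        intro u hu
        have h := step_dvd p hp m (m + n) (u * p ^ m)
        have hexp : ∀ w : ℕ, u * p ^ m + w * p ^ (m + n) = (u + w * p ^ n) * p ^ m := by
          intro w; rw [pow_add]; ring
        have hexp2 : u * p ^ m * p = u * p ^ (m + 1) := by rw [pow_succ]; ring
        rw [hexp2] at h
        rw [Finset.prod_congr rfl fun w _ => by rw [hexp w]] at h
        exact (dvd_sub_comm (α := Polynomial (Polynomial Zq))).mp h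
      have ihh := ih (n + 1) (Nat.succ_pos n)
      have hMN2 : m + (n + 1) - 1 = m + 1 + n - 1 := by omega
      have hMN3 : m + (n + 1) = m + 1 + n := by omega
      rw [hMN2, hMN3] at ihh
      obtain ⟨c1, hc1⟩ := key
      obtain ⟨c2, hc2⟩ := ihh
      exact ⟨c1 + c2, by rw [mul_add, ← hc1, ← hc2]; ring⟩

/-- In `ℤ[q][x,ξ]` (outer variable `ξ`, middle variable `x`, inner variable `q`):
`∏_{u<p^n} ((ξ+x)^{p^m} − q^{up^m+vp^{m+n}} x^{p^m}) ≡ ∏_{j<p^{m+n}} (ξ + x − q^j x)`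
modulo `(p)_{q^{p^{m+n-1}}}`. -/
theorem stmt8 (p : ℕ) (hp : p.Prime) (m n v : ℕ) (hn : 0 < n) :
    (∏ u ∈ Finset.range (p ^ n),
        (((X : Polynomial (Polynomial Zq)) + C Polynomial.X) ^ p ^ m -
          C (Polynomial.C ((X : Zq) ^ (u * p ^ m + v * p ^ (m + n))) * Polynomial.X ^ p ^ m))) -
      (∏ j ∈ Finset.range (p ^ (m + n)),
        ((X : Polynomial (Polynomial Zq)) + C Polynomial.X -
          C (Polynomial.C ((X : Zq) ^ j) * Polynomial.X)))
      ∈ Ideal.span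
          {(C (Polynomial.C (qInt (p ^ (m + n - 1)) p)) : Polynomial (Polynomial Zq))} := by
  refine (Ideal.mem_span_singleton (α := Polynomial (Polynomial Zq))).mpr ?_
  have hq1 : qInt (p ^ (m + n - 1)) p ∣ (X : Zq) ^ p ^ (m + n) - 1 := by
    refine ⟨(X : Zq) ^ p ^ (m + n - 1) - 1, ?_⟩
    rw [qInt_mul_geom (p ^ (m + n - 1)) p]
    congr 2
    rw [← pow_succ]
    congr 1
    omega
  have hq2 : qInt (p ^ (m + n - 1)) p ∣ ((X : Zq) ^ p ^ (m + n)) ^ v - 1 :=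
    dvd_trans hq1 (by simpa using sub_dvd_pow_sub_pow ((X : Zq) ^ p ^ (m + n)) 1 v)
  have h1 : ∀ u : ℕ, (C (Polynomial.C (qInt (p ^ (m + n - 1)) p)) : Polynomial (Polynomial Zq)) ∣
      (((X : Polynomial (Polynomial Zq)) + C Polynomial.X) ^ p ^ m -
          C (Polynomial.C ((X : Zq) ^ (u * p ^ m + v * p ^ (m + n))) * Polynomial.X ^ p ^ m))
        - (((X : Polynomial (Polynomial Zq)) + C Polynomial.X) ^ p ^ m -
          C (Polynomial.C ((X : Zq) ^ (u * p ^ m)) * Polynomial.X ^ p ^ m)) := by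
    intro u
    have hs : qInt (p ^ (m + n - 1)) p ∣
        (X : Zq) ^ (u * p ^ m) - (X : Zq) ^ (u * p ^ m + v * p ^ (m + n)) := by
      have hrw : (X : Zq) ^ (u * p ^ m) - (X : Zq) ^ (u * p ^ m + v * p ^ (m + n))
          = -((X : Zq) ^ (u * p ^ m) * (((X : Zq) ^ p ^ (m + n)) ^ v - 1)) := by
        rw [pow_add, ← pow_mul]
        ring
      rw [hrw]
      exact dvd_neg.mpr (hq2.mul_left _)
    obtain ⟨t, ht⟩ := hs
    refine ⟨C (Polynomial.C t * Polynomial.X ^ p ^ m), ?_⟩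
    have E : (((X : Polynomial (Polynomial Zq)) + C Polynomial.X) ^ p ^ m -
          C (Polynomial.C ((X : Zq) ^ (u * p ^ m + v * p ^ (m + n))) * Polynomial.X ^ p ^ m))
        - (((X : Polynomial (Polynomial Zq)) + C Polynomial.X) ^ p ^ m -
          C (Polynomial.C ((X : Zq) ^ (u * p ^ m)) * Polynomial.X ^ p ^ m))
        = C (Polynomial.C ((X : Zq) ^ (u * p ^ m) - (X : Zq) ^ (u * p ^ m + v * p ^ (m + n)))
            * Polynomial.X ^ p ^ m) := by
      rw [Polynomial.C_sub, sub_mul, Polynomial.C_sub]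
      ring
    rw [E, ht]
    simp only [Polynomial.C_mul]
    ring
  obtain ⟨c1, hc1⟩ := dvd_prod_sub_prod (R := Polynomial (Polynomial Zq)) (Finset.range (p ^ n)) _ _ (fun u _ => h1 u)
  obtain ⟨c2, hc2⟩ := main_ind p hp m n hn
  exact ⟨c1 + c2, by rw [mul_add, ← hc1, ← hc2]; ring⟩
end
end

section
/- Let p be a prime, m ∈ ℕ, n a positive integer, and let l, s ∈ ℕ with 0 ≤ s < p^n. Then, in ℚ(q)[x][ξ], the polynomial ∏_{j=0}^{p^n l + s − 1} ((ξ+x)^{p^m} − q^{j p^m} x^{p^m}) lies in (p)_{q^{p^{m+n−1}}}^{l} · S, i.e., it is (p)_{q^{p^{m+n−1}}}^{l} times an element of S, where (p)_{q^{p^{m+n−1}}} = 1 + q^{p^{m+n−1}} + ⋯ + q^{(p−1)p^{m+n−1}}. -/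
noncomputable section

open Polynomial

/-- The level-`m` twisted divided power `ξ^{{k}_{(m),q}}` in `ℚ(q)[x][ξ]`
(the outer variable is `ξ`, the inner one is `x`). -/
def tdpoly (p m k : ℕ) : Polynomial (Polynomial Qq) :=
  (∏ j ∈ Finset.range k, (X + C (Polynomial.C (1 - qQ ^ j) * Polynomial.X))) *
    C (Polynomial.C (ι (qFact (p ^ m) (k / p ^ m)))⁻¹)

/-- The `ℤ[q]_{(p,q-1)}[x]`-submodule of `ℚ(q)[x][ξ]` spanned by the level-`m`
twisted divided powers `ξ^{{k}_{(m),q}}`: the underlying module of the one-variable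
`m`-`q`-PD polynomial algebra. -/
def Sset (p m : ℕ) : Submodule ℤ (Polynomial (Polynomial Qq)) :=
  Submodule.span ℤ
    { y | ∃ (k j : ℕ) (c : Qq), InLoc p c ∧
        y = C (Polynomial.C c * Polynomial.X ^ j) * tdpoly p m k }


namespace S9


/-- Exact Φ-adic factorization predicate. -/
def Fac (Φ c : Zq) (e : ℕ) : Prop := ∃ u : Zq, ¬ Φ ∣ u ∧ c = Φ ^ e * u

variable {Φ : Zq} (hΦ : Prime Φ)

include hΦ in
lemma Fac.mul {a b : Zq} {e f : ℕ} (ha : Fac Φ a e) (hb : Fac Φ b f) :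
    Fac Φ (a * b) (e + f) := by
  obtain ⟨u, hu, rfl⟩ := ha
  obtain ⟨w, hw, rfl⟩ := hb
  refine ⟨u * w, ?_, by ring⟩
  intro h
  rcases hΦ.dvd_mul.mp h with h | h <;> tauto

include hΦ in
lemma Fac.prod {α : Type*} (s : Finset α) (t : α → Zq) (e : α → ℕ)
    (h : ∀ j ∈ s, Fac Φ (t j) (e j)) :
    Fac Φ (∏ j ∈ s, t j) (∑ j ∈ s, e j) := by
  classical
  induction s using Finset.induction_on with
  | empty => exact ⟨1, fun hd => hΦ.not_unit (isUnit_of_dvd_one hd), by simp⟩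
  | insert _ _ hx ih =>
      rename_i a s'
      rw [Finset.prod_insert hx, Finset.sum_insert hx]
      exact (h a (Finset.mem_insert_self a s')).mul hΦ
        (ih fun j hj => h j (Finset.mem_insert_of_mem hj))

include hΦ in
lemma Fac.cancel {a b : Zq} {e f : ℕ} (hab : Fac Φ (a * b) (e + f)) (hb : Fac Φ b f) :
    Fac Φ a e := by
  obtain ⟨u, hu, hab⟩ := hab
  obtain ⟨w, hw, rfl⟩ := hb
  have hΦ0 : (Φ : Zq) ^ f ≠ 0 := pow_ne_zero _ hΦ.ne_zero
  have key : a * w = Φ ^ e * u := by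
    have : Φ ^ f * (a * w) = Φ ^ f * (Φ ^ e * u) := by ring_nf; ring_nf at hab ⊢; linear_combination hab
    exact mul_left_cancel₀ hΦ0 this
  have hdvd : Φ ^ e ∣ a := hΦ.pow_dvd_of_dvd_mul_right e hw ⟨u, key⟩
  obtain ⟨u', rfl⟩ := hdvd
  refine ⟨u', fun h => ?_, rfl⟩
  have huw : u' * w = u := by
    have : Φ ^ e * (u' * w) = Φ ^ e * u := by linear_combination key
    exact mul_left_cancel₀ (pow_ne_zero _ hΦ.ne_zero) this
  exact hu (huw ▸ h.mul_right w)

section arith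
variable (p m n : ℕ) (hp : p.Prime) (hn : 0 < n)

include hp hn in
/-- `Φ = Φ_{p^{m+n}}` equals the q-integer `(p)_{q^{p^{m+n-1}}}`. -/
lemma Phi_cyc : qInt (p ^ (m + n - 1)) p = Polynomial.cyclotomic (p ^ (m + n)) ℤ := by
  obtain ⟨a, ha⟩ : ∃ a, m + n = a + 1 := ⟨m + n - 1, by omega⟩
  have ha' : m + n - 1 = a := by omega
  rw [ha', ha, Polynomial.cyclotomic_prime_pow_eq_geom_sum hp, qInt]
  exact Finset.sum_congr rfl fun j _ => pow_mul X _ j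

include hp hn in
lemma Phi_prime : Prime (qInt (p ^ (m + n - 1)) p) := by
  rw [Phi_cyc p m n hp hn]
  exact UniqueFactorizationMonoid.irreducible_iff_prime.mp
    (Polynomial.cyclotomic.irreducible (pow_pos hp.pos _))

def zz (M : ℕ) : ℂ := Complex.exp (2 * Real.pi * Complex.I / M)

include hp hn in
lemma aeval_Phi_eq_zero :
    (Polynomial.aeval (zz (p ^ (m + n))) : Zq →ₐ[ℤ] ℂ) (qInt (p ^ (m + n - 1)) p) = 0 := by
  have hM : (p : ℕ) ^ (m + n) ≠ 0 := (pow_pos hp.pos _).ne'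
  have hζ : IsPrimitiveRoot (zz (p ^ (m + n))) (p ^ (m + n)) :=
    Complex.isPrimitiveRoot_exp _ hM
  rw [Phi_cyc p m n hp hn]
  have : Polynomial.aeval (zz (p ^ (m + n))) (Polynomial.cyclotomic (p ^ (m + n)) ℤ)
      = Polynomial.eval (zz (p ^ (m + n))) (Polynomial.cyclotomic (p ^ (m + n)) ℂ) := by
    rw [Polynomial.aeval_def, Polynomial.eval₂_eq_eval_map]
    congr 1
    have := Polynomial.map_cyclotomic_int (p ^ (m + n)) ℂ
    exact Polynomial.map_cyclotomic _ _
  rw [this]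
  exact hζ.isRoot_cyclotomic (pow_pos hp.pos _)

include hp hn in
lemma not_dvd_of_aeval_ne {u : Zq}
    (h : (Polynomial.aeval (zz (p ^ (m + n))) : Zq →ₐ[ℤ] ℂ) u ≠ 0) :
    ¬ qInt (p ^ (m + n - 1)) p ∣ u := by
  rintro ⟨w, rfl⟩
  rw [map_mul, aeval_Phi_eq_zero p m n hp hn, zero_mul] at h
  exact h rfl

end arith
/-- the basic geometric-sum identity `(n)_{q^a} (q^a - 1) = q^{an} - 1`. -/
lemma qInt_mul (a d : ℕ) : qInt a d * (X ^ a - 1) = X ^ (a * d) - (1 : Zq) := by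
  have := geom_sum_mul ((X : Zq) ^ a) d
  rw [qInt]
  calc (∑ j ∈ Finset.range d, (X : Zq) ^ (a * j)) * (X ^ a - 1)
      = (∑ j ∈ Finset.range d, ((X : Zq) ^ a) ^ j) * (X ^ a - 1) := by
        congr 1; exact Finset.sum_congr rfl fun j _ => pow_mul X a j
    _ = ((X : Zq) ^ a) ^ d - 1 := this
    _ = X ^ (a * d) - 1 := by rw [← pow_mul]

section arith
variable (p m n : ℕ) (hp : p.Prime) (hn : 0 < n)

local notation "Φ" => qInt (p ^ (m + n - 1)) p
local notation "M" => p ^ (m + n)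
local notation "ζ" => zz (p ^ (m + n))

include hp hn

lemma hzeta : IsPrimitiveRoot (zz (p ^ (m + n))) (p ^ (m + n)) :=
  Complex.isPrimitiveRoot_exp _ (pow_pos hp.pos _).ne'

lemma Fac_X_pow (i : ℕ) : Fac Φ ((X : Zq) ^ i) 0 := by
  refine ⟨X ^ i, not_dvd_of_aeval_ne p m n hp hn ?_, by rw [pow_zero, one_mul]⟩
  rw [map_pow, Polynomial.aeval_X]
  exact pow_ne_zero _ ((hzeta p m n hp hn).ne_zero (pow_pos hp.pos _).ne')

lemma Fac_X_pow_sub_one {r : ℕ} (hr : 0 < r) :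
    Fac Φ ((X : Zq) ^ r - 1) (if M ∣ r then 1 else 0) := by
  by_cases hd : M ∣ r
  · rw [if_pos hd]
    obtain ⟨d, rfl⟩ := hd
    have hd1 : 0 < d := by
      rcases Nat.eq_zero_or_pos d with h | h
      · subst h; simp at hr
      · exact h
    have key : (X : Zq) ^ (M * d) - 1 = Φ ^ 1 * ((X ^ (p ^ (m + n - 1)) - 1) * qInt (M) d) := by
      have h1 : Φ * ((X : Zq) ^ (p ^ (m + n - 1)) - 1) = X ^ (M) - 1 := by
        have := qInt_mul (p ^ (m + n - 1)) p
        rw [mul_comm] at this ⊢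
        rw [this]
        congr 2
        rw [← pow_succ]
        congr 1
        omega
      calc (X : Zq) ^ (M * d) - 1 = qInt (M) d * (X ^ (M) - 1) := (qInt_mul (M) d).symm
        _ = qInt (M) d * (Φ * ((X : Zq) ^ (p ^ (m + n - 1)) - 1)) := by rw [h1]
        _ = Φ ^ 1 * ((X ^ (p ^ (m + n - 1)) - 1) * qInt (M) d) := by ring
    refine ⟨_, not_dvd_of_aeval_ne p m n hp hn ?_, key⟩
    have hζ := hzeta p m n hp hn
    rw [map_mul]
    apply mul_ne_zero
    · rw [map_sub, map_pow, Polynomial.aeval_X, map_one, sub_ne_zero]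
      intro h1
      have := (hζ.pow_eq_one_iff_dvd _).mp h1
      have hlt : p ^ (m + n - 1) < p ^ (m + n) := Nat.pow_lt_pow_right hp.one_lt (by omega)
      have := Nat.le_of_dvd (pow_pos hp.pos _) this
      omega
    · rw [qInt, map_sum]
      have : ∀ j ∈ Finset.range d, (Polynomial.aeval ζ) ((X : Zq) ^ (M * j)) = 1 := by
        intro j _
        rw [map_pow, Polynomial.aeval_X, pow_mul, (hzeta p m n hp hn).pow_eq_one, one_pow]
      rw [Finset.sum_congr rfl this, Finset.sum_const, Finset.card_range, nsmul_eq_mul, mul_one]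
      exact_mod_cast Nat.cast_ne_zero.mpr hd1.ne'
  · rw [if_neg hd]
    refine ⟨_, not_dvd_of_aeval_ne p m n hp hn ?_, by rw [pow_zero, one_mul]⟩
    rw [map_sub, map_pow, Polynomial.aeval_X, map_one, sub_ne_zero]
    intro h1
    exact hd ((hzeta p m n hp hn).pow_eq_one_iff_dvd _ |>.mp h1)

lemma Fac_factor {i j : ℕ} (hij : j < i) :
    Fac Φ ((X : Zq) ^ i - X ^ j) (if M ∣ (i - j) then 1 else 0) := by
  have key : (X : Zq) ^ i - X ^ j = X ^ j * (X ^ (i - j) - 1) := by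
    rw [mul_sub, mul_one, ← pow_add]
    congr 2
    omega
  rw [key]
  have := (Fac_X_pow p m n hp hn j).mul (Phi_prime p m n hp hn)
    (Fac_X_pow_sub_one p m n hp hn (r := i - j) (by omega))
  simpa using this

lemma Fac_qInt {t : ℕ} (ht : 0 < t) :
    Fac Φ (qInt (p ^ m) t) (if p ^ n ∣ t then 1 else 0) := by
  have hdvd_iff : M ∣ p ^ m * t ↔ p ^ n ∣ t := by
    rw [pow_add]
    exact Nat.mul_dvd_mul_iff_left (pow_pos hp.pos m)
  have h1 : Fac Φ (qInt (p ^ m) t * (X ^ (p ^ m) - 1))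
      ((if p ^ n ∣ t then 1 else 0) + 0) := by
    have := Fac_X_pow_sub_one p m n hp hn (r := p ^ m * t) (Nat.mul_pos (pow_pos hp.pos m) ht)
    rw [qInt_mul]
    simp only [add_zero]
    rwa [if_congr hdvd_iff rfl rfl] at this
  have h2 : Fac Φ ((X : Zq) ^ (p ^ m) - 1) 0 := by
    have := Fac_X_pow_sub_one p m n hp hn (r := p ^ m) (pow_pos hp.pos m)
    have hnd : ¬ M ∣ p ^ m := by
      intro h
      have := Nat.le_of_dvd (pow_pos hp.pos _) h
      have : p ^ m < p ^ (m + n) := Nat.pow_lt_pow_right hp.one_lt (by omega)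
      omega
    rwa [if_neg hnd] at this
  exact (h1).cancel (Phi_prime p m n hp hn) h2

lemma Fac_qFact (K : ℕ) : Fac Φ (qFact (p ^ m) K) (K / p ^ n) := by
  have h := Fac.prod (Phi_prime p m n hp hn) (Finset.range K)
    (fun t => qInt (p ^ m) (t + 1)) (fun t => if p ^ n ∣ (t + 1) then 1 else 0)
    (fun t _ => Fac_qInt p m n hp hn (by omega))
  rw [qFact]
  convert h using 1
  have hcard : (Finset.filter (fun t => p ^ n ∣ (t + 1)) (Finset.range K)).card
      = (Finset.filter (fun d => p ^ n ∣ d) (Finset.Ioc 0 K)).card := by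
    refine Finset.card_bij' (fun t _ => t + 1) (fun d _ => d - 1) ?_ ?_ ?_ ?_
    · intro a ha
      simp only [Finset.mem_filter, Finset.mem_range] at ha
      simp only [Finset.mem_filter, Finset.mem_Ioc]
      exact ⟨⟨by omega, by omega⟩, ha.2⟩
    · intro d hd
      simp only [Finset.mem_filter, Finset.mem_Ioc] at hd
      simp only [Finset.mem_filter, Finset.mem_range]
      constructor
      · omega
      · have : d - 1 + 1 = d := by omega
        rw [this]; exact hd.2
    · intro a _
      show a + 1 - 1 = a
      omega
    · intro d hd
      simp only [Finset.mem_filter, Finset.mem_Ioc] at hd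
      show d - 1 + 1 = d
      omega
  calc K / p ^ n = (Finset.filter (fun d => p ^ n ∣ d) (Finset.Ioc 0 K)).card :=
        (Nat.Ioc_filter_dvd_card_eq_div K (p ^ n)).symm
    _ = (Finset.filter (fun t => p ^ n ∣ (t + 1)) (Finset.range K)).card := hcard.symm
    _ = ∑ j ∈ Finset.range K, (if p ^ n ∣ (j + 1) then 1 else 0) := by
        rw [Finset.sum_boole]; simp
    _ = _ := rfl

end arith
/-- number of `j < k` with `M ∣ k - j` is `k / M`. -/
lemma card_filter_sub_self (M k : ℕ) :
    ((Finset.range k).filter (fun j => M ∣ (k - j))).card = k / M := by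
  rcases Nat.eq_zero_or_pos M with hM | hM
  · subst hM
    simp only [Nat.zero_dvd, Nat.div_zero]
    rw [Finset.card_eq_zero, Finset.filter_eq_empty_iff]
    intro j hj
    simp only [Finset.mem_range] at hj
    omega
  rw [← Nat.Ioc_filter_dvd_card_eq_div]
  refine Finset.card_bij' (fun j _ => k - j) (fun d _ => k - d) ?_ ?_ ?_ ?_
  · intro j hj
    simp only [Finset.mem_filter, Finset.mem_range] at hj
    simp only [Finset.mem_filter, Finset.mem_Ioc]
    exact ⟨⟨by omega, by omega⟩, hj.2⟩
  · intro d hd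
    simp only [Finset.mem_filter, Finset.mem_Ioc] at hd
    simp only [Finset.mem_filter, Finset.mem_range]
    constructor
    · omega
    · have h1 : k - (k - d) = d := by omega
      rw [h1]; exact hd.2
  · intro j hj
    simp only [Finset.mem_filter, Finset.mem_range] at hj
    show k - (k - j) = j
    omega
  · intro d hd
    simp only [Finset.mem_filter, Finset.mem_Ioc] at hd
    show k - (k - d) = d
    omega

/-- superadditivity-type lower bound for the count over a shorter range. -/
lemma card_filter_sub_ge (M k k' : ℕ) (h : k' ≤ k) :
    k' / M ≤ ((Finset.range k').filter (fun j => M ∣ (k - j))).card := by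
  rcases Nat.eq_zero_or_pos M with hM | hM
  · subst hM; simp
  rw [← Finset.card_range (k' / M)]
  refine Finset.card_le_card_of_injOn (fun t => k - ((k - k') / M + 1 + t) * M) ?_ ?_
  · intro t ht
    simp only [Finset.mem_coe, Finset.mem_range] at ht
    have h1 : ((k - k') / M) * M ≤ k - k' := Nat.div_mul_le_self _ _
    have h2 : (1 + t) * M ≤ (k' / M) * M := Nat.mul_le_mul_right _ (by omega)
    have h3 : (k' / M) * M ≤ k' := Nat.div_mul_le_self _ _
    have hsum : ((k - k') / M + 1 + t) * M = ((k - k') / M) * M + (1 + t) * M := by ring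
    have hmod : ((k - k') / M) * M + (k - k') % M = k - k' := by
      rw [mul_comm]; exact Nat.div_add_mod _ _
    have hmodlt : (k - k') % M < M := Nat.mod_lt _ hM
    have h4 : 1 * M ≤ (1 + t) * M := Nat.mul_le_mul_right _ (by omega)
    have hle : ((k - k') / M + 1 + t) * M ≤ k := by omega
    have hgt : k - k' < ((k - k') / M + 1 + t) * M := by omega
    simp only [Finset.mem_coe, Finset.mem_filter, Finset.mem_range]
    constructor
    · omega
    · have : k - (k - ((k - k') / M + 1 + t) * M) = ((k - k') / M + 1 + t) * M := by omega
      rw [this]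
      exact dvd_mul_left M _
  · intro t1 ht1 t2 ht2 heq
    simp only [Finset.coe_range, Set.mem_Iio] at ht1 ht2
    have heq' : k - ((k - k') / M + 1 + t1) * M = k - ((k - k') / M + 1 + t2) * M := heq
    have h1 : ((k - k') / M) * M ≤ k - k' := Nat.div_mul_le_self _ _
    have h3 : (k' / M) * M ≤ k' := Nat.div_mul_le_self _ _
    have h41 : 1 * M ≤ (1 + t1) * M := Nat.mul_le_mul_right _ (by omega)
    have h42 : 1 * M ≤ (1 + t2) * M := Nat.mul_le_mul_right _ (by omega)
    have e1 : ((k - k') / M + 1 + t1) * M = ((k - k') / M) * M + (1 + t1) * M := by ring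
    have e2 : ((k - k') / M + 1 + t2) * M = ((k - k') / M) * M + (1 + t2) * M := by ring
    have g1 : (1 + t1) * M ≤ (k' / M) * M := Nat.mul_le_mul_right _ (by omega)
    have g2 : (1 + t2) * M ≤ (k' / M) * M := Nat.mul_le_mul_right _ (by omega)
    have hle1 : ((k - k') / M + 1 + t1) * M ≤ k := by omega
    have hle2 : ((k - k') / M + 1 + t2) * M ≤ k := by omega
    have : ((k - k') / M + 1 + t1) * M = ((k - k') / M + 1 + t2) * M := by omega
    have := Nat.eq_of_mul_eq_mul_right hM this
    omega

def FZ (a N i : ℕ) : Zq := ∏ j ∈ Finset.range N, ((X : Zq) ^ (i * a) - X ^ (j * a))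

section arith
variable (p m n : ℕ) (hp : p.Prime) (hn : 0 < n)

local notation "Φ" => qInt (p ^ (m + n - 1)) p

include hp hn in
lemma Phi_dvd_factor {i j : ℕ} (hij : j < i) (hd : p ^ n ∣ (i - j)) :
    Φ ∣ ((X : Zq) ^ (i * p ^ m) - X ^ (j * p ^ m)) := by
  obtain ⟨d, hdd⟩ := hd
  have key : (X : Zq) ^ (i * p ^ m) - X ^ (j * p ^ m)
      = X ^ (j * p ^ m) * (X ^ ((i - j) * p ^ m) - 1) := by
    rw [mul_sub, mul_one, ← pow_add]
    congr 2
    have : j * p ^ m + (i - j) * p ^ m = (j + (i - j)) * p ^ m := by ring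
    rw [this]
    congr 1
    omega
  rw [key]
  have hM : p ^ (m + n) ∣ (i - j) * p ^ m := by
    refine ⟨d, ?_⟩
    rw [hdd, pow_add]
    ring
  have hFac := Fac_X_pow_sub_one p m n hp hn (r := (i - j) * p ^ m)
    (Nat.mul_pos (by omega) (pow_pos hp.pos m))
  rw [if_pos hM] at hFac
  obtain ⟨u, _, hu⟩ := hFac
  exact Dvd.dvd.mul_left ⟨u, by rw [hu, pow_one]⟩ _

include hp hn in
lemma Phi_pow_dvd_FZ (N l s : ℕ) (hN : N = p ^ n * l + s) (hs : s < p ^ n) (i : ℕ) :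
    Φ ^ l ∣ FZ (p ^ m) N i := by
  rcases lt_or_ge i N with hi | hi
  · have : FZ (p ^ m) N i = 0 :=
      Finset.prod_eq_zero (Finset.mem_range.mpr hi) (by rw [sub_self])
    rw [this]
    exact dvd_zero _
  · have hpn : 0 < p ^ n := pow_pos hp.pos n
    set s' : Finset ℕ := (Finset.range l).image (fun t => i % p ^ n + t * p ^ n) with hs'
    have hinj : Function.Injective (fun t => i % p ^ n + t * p ^ n) := by
      intro t1 t2 h12
      simp only at h12
      have : t1 * p ^ n = t2 * p ^ n := by omega
      exact Nat.eq_of_mul_eq_mul_right hpn this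
    have hsub : s' ⊆ Finset.range N := by
      intro j hj
      simp only [hs', Finset.mem_image, Finset.mem_range] at hj
      obtain ⟨t, ht, rfl⟩ := hj
      have h1 : i % p ^ n < p ^ n := Nat.mod_lt _ hpn
      have h2 : (t + 1) * p ^ n ≤ l * p ^ n := Nat.mul_le_mul_right _ (by omega)
      have h3 : (t + 1) * p ^ n = t * p ^ n + p ^ n := by ring
      have h4 : p ^ n * l = l * p ^ n := by ring
      simp only [Finset.mem_range]
      omega
    have hdvd : ∀ j ∈ s', Φ ∣ ((X : Zq) ^ (i * p ^ m) - X ^ (j * p ^ m)) := by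
      intro j hj
      have hjN : j < N := Finset.mem_range.mp (hsub hj)
      simp only [hs', Finset.mem_image, Finset.mem_range] at hj
      obtain ⟨t, ht, rfl⟩ := hj
      refine Phi_dvd_factor p m n hp hn (by omega) ?_
      have hmod := Nat.div_add_mod i (p ^ n)
      have hcomm : p ^ n * (i / p ^ n) = (i / p ^ n) * p ^ n := by ring
      have hti : t ≤ i / p ^ n := by
        by_contra hc
        push_neg at hc
        have : (i / p ^ n + 1) * p ^ n ≤ t * p ^ n := Nat.mul_le_mul_right _ (by omega)
        have h5 : (i / p ^ n + 1) * p ^ n = (i / p ^ n) * p ^ n + p ^ n := by ring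
        have h6 : i % p ^ n < p ^ n := Nat.mod_lt _ hpn
        omega
      obtain ⟨d, hd⟩ : ∃ d, i / p ^ n = t + d := ⟨i / p ^ n - t, by omega⟩
      refine ⟨d, ?_⟩
      rw [hd] at hmod
      have hdistrib : p ^ n * (t + d) = p ^ n * t + p ^ n * d := by ring
      have hc2 : p ^ n * t = t * p ^ n := by ring
      omega
    have hcard : s'.card = l := by
      rw [hs', Finset.card_image_of_injective _ hinj, Finset.card_range]
    calc Φ ^ l = ∏ _j ∈ s', Φ := by rw [Finset.prod_const, hcard]
      _ ∣ ∏ j ∈ s', ((X : Zq) ^ (i * p ^ m) - X ^ (j * p ^ m)) :=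
          Finset.prod_dvd_prod_of_dvd _ _ (fun j hj => hdvd j hj)
      _ ∣ FZ (p ^ m) N i := Finset.prod_dvd_prod_of_subset _ _ _ hsub

end arith

def piZ (k i : ℕ) : Zq := ∏ j ∈ Finset.range k, ((X : Zq) ^ i - X ^ j)
/-! ### polynomial part -/

abbrev Zqx := Polynomial Zq
abbrev Zqxx := Polynomial Zqx

/-- the twisted-power numerator `∏_{j<k} (ξ + (1-q^j)x)` over `ℤ[q]`. -/
def Tz (k : ℕ) : Zqxx :=
  ∏ j ∈ Finset.range k, (X + C (Polynomial.C (1 - (X : Zq) ^ j) * Polynomial.X))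

/-- the big product `∏_{j<N} ((ξ+x)^{p^m} - q^{jp^m} x^{p^m})` over `ℤ[q]`. -/
def PZpoly (a N : ℕ) : Zqxx :=
  ∏ j ∈ Finset.range N,
    ((X + C Polynomial.X) ^ a - C (Polynomial.C ((X : Zq) ^ (j * a)) * Polynomial.X ^ a))

lemma Tz_monic (k : ℕ) : (Tz k).Monic :=
  monic_prod_of_monic _ _ fun j _ => monic_X_add_C _

lemma Tz_natDegree (k : ℕ) : (Tz k).natDegree = k := by
  rw [Tz, natDegree_prod _ _ (fun j _ => (monic_X_add_C _).ne_zero)]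
  have h1 : ∀ j ∈ Finset.range k,
      (X + C (Polynomial.C (1 - (X : Zq) ^ j) * Polynomial.X)).natDegree = 1 :=
    fun j _ => natDegree_X_add_C _
  rw [Finset.sum_congr rfl h1, Finset.sum_const, Finset.card_range, smul_eq_mul, mul_one]

/-- expansion of any polynomial in the basis `Tz k`. -/
lemma exists_expansion : ∀ (d : ℕ) (f : Zqxx), f.natDegree ≤ d →
    ∃ G : ℕ → Zqx, f = ∑ k ∈ Finset.range (d + 1), C (G k) * Tz k := by
  intro d
  induction d with
  | zero =>
      intro f hf
      refine ⟨fun _ => f.coeff 0, ?_⟩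
      rw [Finset.sum_range_one, Tz, Finset.range_zero, Finset.prod_empty, mul_one]
      exact Polynomial.eq_C_of_natDegree_le_zero hf
  | succ d IH =>
      intro f hf
      set g : Zqxx := f - C (f.coeff (d + 1)) * Tz (d + 1) with hg
      have hgd : g.natDegree ≤ d := by
        rw [Polynomial.natDegree_le_iff_coeff_eq_zero]
        intro N hN
        rw [hg, Polynomial.coeff_sub, Polynomial.coeff_C_mul]
        rcases Nat.lt_or_ge (d + 1) N with h | h
        · have e1 : f.coeff N = 0 :=
            Polynomial.coeff_eq_zero_of_natDegree_lt (lt_of_le_of_lt hf h)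
          have e2 : (Tz (d + 1)).coeff N = 0 :=
            Polynomial.coeff_eq_zero_of_natDegree_lt (by rw [Tz_natDegree]; exact h)
          rw [e1, e2, mul_zero, sub_zero]
        · have hNd : N = d + 1 := by omega
          subst hNd
          have : (Tz (d+1)).coeff (d+1) = 1 := by
            have := (Tz_monic (d+1)).coeff_natDegree
            rwa [Tz_natDegree] at this
          rw [this, mul_one, sub_self]
      obtain ⟨G', hG'⟩ := IH g hgd
      refine ⟨fun k => if k = d + 1 then f.coeff (d + 1) else G' k, ?_⟩
      rw [Finset.sum_range_succ]
      have h1 : ∑ k ∈ Finset.range (d + 1),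
          C (if k = d + 1 then f.coeff (d + 1) else G' k) * Tz k
          = ∑ k ∈ Finset.range (d + 1), C (G' k) * Tz k := by
        refine Finset.sum_congr rfl fun k hk => ?_
        rw [Finset.mem_range] at hk
        rw [if_neg (by omega)]
      have h2 : (fun k => if k = d + 1 then f.coeff (d + 1) else G' k) (d + 1)
          = f.coeff (d + 1) := by simp
      rw [h1, h2, ← hG', hg]
      ring

/-- evaluation point `ξ = (q^i - 1)x`. -/
def vz (i : ℕ) : Zqx := Polynomial.C ((X : Zq) ^ i - 1) * Polynomial.X

lemma eval_Tz (i k : ℕ) :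
    Polynomial.eval (vz i) (Tz k) = Polynomial.C (piZ k i) * Polynomial.X ^ k := by
  rw [Tz, Polynomial.eval_prod, piZ]
  have h1 : ∀ j ∈ Finset.range k,
      Polynomial.eval (vz i) (X + C (Polynomial.C (1 - (X : Zq) ^ j) * Polynomial.X))
      = Polynomial.C ((X : Zq) ^ i - X ^ j) * Polynomial.X := by
    intro j _
    rw [Polynomial.eval_add, Polynomial.eval_X, Polynomial.eval_C, vz]
    rw [← add_mul, ← Polynomial.C_add]
    congr 2
    ring
  rw [Finset.prod_congr rfl h1, Finset.prod_mul_distrib, Finset.prod_const, Finset.card_range,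
    ← map_prod (Polynomial.C : Zq →+* Zqx)]

lemma eval_PZ (a N i : ℕ) :
    Polynomial.eval (vz i) (PZpoly a N)
      = Polynomial.C (FZ a N i) * Polynomial.X ^ (a * N) := by
  rw [PZpoly, Polynomial.eval_prod, FZ]
  have h1 : ∀ j ∈ Finset.range N,
      Polynomial.eval (vz i)
        ((X + C Polynomial.X) ^ a - C (Polynomial.C ((X : Zq) ^ (j * a)) * Polynomial.X ^ a))
      = Polynomial.C ((X : Zq) ^ (i * a) - X ^ (j * a)) * Polynomial.X ^ a := by
    intro j _
    rw [Polynomial.eval_sub, Polynomial.eval_pow, Polynomial.eval_add, Polynomial.eval_X,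
      Polynomial.eval_C, Polynomial.eval_C, vz]
    have h2 : Polynomial.C ((X : Zq) ^ i - 1) * Polynomial.X + Polynomial.X
        = Polynomial.C ((X : Zq) ^ i) * Polynomial.X := by
      have h3 : (X : Zq) ^ i = ((X : Zq) ^ i - 1) + 1 := by ring
      conv_rhs => rw [h3]
      rw [Polynomial.C_add, Polynomial.C_1, add_mul, one_mul]
    rw [h2, mul_pow, ← Polynomial.C_pow, ← pow_mul, Polynomial.C_sub, sub_mul]
  rw [Finset.prod_congr rfl h1, Finset.prod_mul_distrib, Finset.prod_const, Finset.card_range,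
    ← map_prod (Polynomial.C : Zq →+* Zqx), ← pow_mul]

section main
variable (p m n : ℕ) (hp : p.Prime) (hn : 0 < n)

local notation "Φ" => qInt (p ^ (m + n - 1)) p

include hp hn in
lemma Fac_piZ {k i : ℕ} (hki : k ≤ i) :
    Fac Φ (piZ k i) (((Finset.range k).filter (fun j => p ^ (m + n) ∣ (i - j))).card) := by
  have h := Fac.prod (Phi_prime p m n hp hn) (Finset.range k)
    (fun j => (X : Zq) ^ i - X ^ j) (fun j => if p ^ (m + n) ∣ (i - j) then 1 else 0)
    (fun j hj => Fac_factor p m n hp hn (by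
      rw [Finset.mem_range] at hj; omega))
  rw [piZ]
  convert h using 1
  rw [Finset.sum_boole]
  simp

include hp hn in
lemma main_dvd (l s N D : ℕ) (hN : N = p ^ n * l + s) (hs : s < p ^ n)
    (G : ℕ → Zqx) (hG : PZpoly (p ^ m) N = ∑ k ∈ Finset.range (D + 1), C (G k) * Tz k) :
    ∀ k, k ≤ D → ∀ t, Φ ^ l ∣ qFact (p ^ m) (k / p ^ m) * (G k).coeff t := by
  have hΦ : Prime Φ := Phi_prime p m n hp hn
  intro k
  induction k using Nat.strong_induction_on with
  | _ k IH =>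
    intro hk t
    -- evaluate the expansion at ξ = (q^k - 1) x
    have heq := congrArg (Polynomial.eval (vz k)) hG
    rw [eval_PZ, Polynomial.eval_finset_sum] at heq
    have hterm : ∀ k' ∈ Finset.range (D + 1),
        Polynomial.eval (vz k) (C (G k') * Tz k')
        = Polynomial.C (piZ k' k) * G k' * Polynomial.X ^ k' := by
      intro k' _
      rw [Polynomial.eval_mul, Polynomial.eval_C, eval_Tz]
      ring
    rw [Finset.sum_congr rfl hterm] at heq
    -- terms with k' > k vanish
    have heq2 : Polynomial.C (FZ (p ^ m) N k) * Polynomial.X ^ (p ^ m * N)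
        = ∑ k' ∈ Finset.range (k + 1), Polynomial.C (piZ k' k) * G k' * Polynomial.X ^ k' := by
      rw [heq]
      refine (Finset.sum_subset (by intro x hx; rw [Finset.mem_range] at hx ⊢; omega) ?_).symm
      intro x hx hnx
      rw [Finset.mem_range] at hx hnx
      have hzero : piZ x k = 0 :=
        Finset.prod_eq_zero (Finset.mem_range.mpr (by omega : k < x)) (by rw [sub_self])
      rw [hzero, Polynomial.C_0, zero_mul, zero_mul]
    -- extract the coefficient at t + k
    have hco := congrArg (fun P : Zqx => P.coeff (t + k)) heq2
    simp only [Polynomial.finset_sum_coeff] at hco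
    rw [Polynomial.coeff_C_mul, Polynomial.coeff_X_pow] at hco
    have hterm2 : ∀ k' ∈ Finset.range (k + 1),
        (Polynomial.C (piZ k' k) * G k' * Polynomial.X ^ k').coeff (t + k)
        = piZ k' k * (G k').coeff (t + k - k') := by
      intro k' hk'
      rw [Finset.mem_range] at hk'
      rw [Polynomial.coeff_mul_X_pow', if_pos (by omega), Polynomial.coeff_C_mul]
    rw [Finset.sum_congr rfl hterm2, Finset.sum_range_succ] at hco
    have hsimp : t + k - k = t := by omega
    rw [hsimp] at hco
    -- notation
    set γ : ℕ → Zq := fun k' => qFact (p ^ m) (k' / p ^ m) with hγ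
    set Mn : ℕ := p ^ (m + n) with hMn
    have hMdiv : ∀ k' : ℕ, (k' / p ^ m) / p ^ n = k' / Mn := by
      intro k'
      rw [Nat.div_div_eq_div_mul, hMn, pow_add]
    -- the three Fac facts
    have hFacγ : Fac Φ (γ k) (k / Mn) := by
      rw [hγ]
      have := Fac_qFact p m n hp hn (k / p ^ m)
      rwa [hMdiv k] at this
    have hFacπ : Fac Φ (piZ k k) (k / Mn) := by
      have := Fac_piZ p m n hp hn (le_refl k)
      rwa [card_filter_sub_self] at this
    set e : ℕ := k / Mn with he
    -- main divisibility of the RHS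
    have hsum : ∀ k' ∈ Finset.range k,
        Φ ^ (l + e) ∣ γ k * (piZ k' k * (G k').coeff (t + k - k')) := by
      intro k' hk'
      rw [Finset.mem_range] at hk'
      set c' : Zq := (G k').coeff (t + k - k') with hc'
      obtain ⟨u, hu_nd, hu⟩ := hFacγ
      set f : ℕ := ((Finset.range k').filter (fun j => Mn ∣ (k - j))).card with hf
      obtain ⟨w, hw_nd, hw⟩ := Fac_piZ p m n hp hn (le_of_lt hk' : k' ≤ k)
      obtain ⟨u', hu'_nd, hu'⟩ := by
        have := Fac_qFact p m n hp hn (k' / p ^ m)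
        rw [hMdiv k'] at this
        exact this
      obtain ⟨z, hz⟩ := IH k' hk' (by omega) (t + k - k')
      have hfge : k' / Mn ≤ f := card_filter_sub_ge Mn k k' (by omega)
      have hele : k' / Mn ≤ e := by
        rw [he]
        exact Nat.div_le_div_right (by omega)
      set e' : ℕ := k' / Mn with he'
      obtain ⟨g', hg⟩ : ∃ g', e' + g' = e + f + l := ⟨e + f + l - e', by omega⟩
      have hz' : Φ ^ e' * u' * c' = Φ ^ l * z := by
        rw [← hu']
        exact hz
      have hE : Φ ^ e' * (u' * (γ k * (piZ k' k * c')))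
          = Φ ^ e' * (Φ ^ g' * (u * w * z)) := by
        calc Φ ^ e' * (u' * (γ k * (piZ k' k * c')))
            = (Φ ^ e * u) * (Φ ^ f * w) * (Φ ^ e' * u' * c') := by rw [← hu, ← hw]; ring
          _ = (Φ ^ e * u) * (Φ ^ f * w) * (Φ ^ l * z) := by rw [hz']
          _ = Φ ^ (e + f + l) * (u * w * z) := by rw [pow_add, pow_add]; ring
          _ = Φ ^ e' * (Φ ^ g' * (u * w * z)) := by
              rw [← hg, pow_add, mul_assoc]
      have hcan : u' * (γ k * (piZ k' k * c')) = Φ ^ g' * (u * w * z) :=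
        mul_left_cancel₀ (pow_ne_zero _ hΦ.ne_zero) hE
      have hdvd1 : Φ ^ (l + e) ∣ u' * (γ k * (piZ k' k * c')) := by
        rw [hcan]
        refine dvd_trans (pow_dvd_pow Φ ?_) (dvd_mul_right _ _)
        omega
      exact hΦ.pow_dvd_of_dvd_mul_left _ hu'_nd hdvd1
    -- first term
    have hfirst : Φ ^ (l + e) ∣ γ k * (FZ (p ^ m) N k * (if t + k = p ^ m * N then 1 else 0)) := by
      by_cases hcase : t + k = p ^ m * N
      · rw [if_pos hcase, mul_one]
        obtain ⟨u, _, hu⟩ := hFacγ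
        have h1 : Φ ^ e ∣ γ k := by rw [hu]; exact Dvd.intro _ rfl
        have h2 : Φ ^ l ∣ FZ (p ^ m) N k := Phi_pow_dvd_FZ p m n hp hn N l s hN hs k
        calc Φ ^ (l + e) = Φ ^ e * Φ ^ l := by rw [← pow_add, Nat.add_comm l e]
          _ ∣ γ k * FZ (p ^ m) N k := mul_dvd_mul h1 h2
      · rw [if_neg hcase, mul_zero, mul_zero]
        exact dvd_zero _
    -- combine
    have hmain : Φ ^ (l + e) ∣ piZ k k * (γ k * (G k).coeff t) := by
      have harr : piZ k k * (γ k * (G k).coeff t)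
          = γ k * (FZ (p ^ m) N k * (if t + k = p ^ m * N then 1 else 0))
            - γ k * (∑ k' ∈ Finset.range k, piZ k' k * (G k').coeff (t + k - k')) := by
        have hco' : (∑ k' ∈ Finset.range k, piZ k' k * (G k').coeff (t + k - k'))
            + piZ k k * (G k).coeff t
            = FZ (p ^ m) N k * (if t + k = p ^ m * N then 1 else 0) := by
          rw [← hco]
        linear_combination γ k * hco'
      rw [harr]
      refine dvd_sub hfirst ?_
      rw [Finset.mul_sum]
      exact Finset.dvd_sum fun k' hk' => hsum k' hk'
    -- cancel piZ k k
    obtain ⟨w', hw'_nd, hw'⟩ := hFacπ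
    have hfin : Φ ^ l ∣ w' * (γ k * (G k).coeff t) := by
      have h1 : Φ ^ e * (Φ ^ l) ∣ Φ ^ e * (w' * (γ k * (G k).coeff t)) := by
        have h2 : Φ ^ e * (w' * (γ k * (G k).coeff t)) = piZ k k * (γ k * (G k).coeff t) := by
          rw [hw']; ring
        rw [h2, ← pow_add]
        have : e + l = l + e := by omega
        rw [this]
        exact hmain
      exact (mul_dvd_mul_iff_left (pow_ne_zero e hΦ.ne_zero)).mp h1
    exact hΦ.pow_dvd_of_dvd_mul_left _ hw'_nd hfin

end main

section assembly

lemma qFact_ne_zero (a K : ℕ) : qFact a K ≠ 0 := by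
  intro h
  have := congrArg (Polynomial.eval (1 : ℤ)) h
  rw [qFact, Polynomial.eval_prod, Polynomial.eval_zero] at this
  have h1 : ∀ i ∈ Finset.range K, Polynomial.eval (1 : ℤ) (qInt a (i + 1)) = (i + 1 : ℤ) := by
    intro i _
    rw [qInt, Polynomial.eval_finset_sum]
    simp
  rw [Finset.prod_congr rfl h1] at this
  have h2 : (∏ i ∈ Finset.range K, ((i : ℤ) + 1)) ≠ 0 := by
    refine Finset.prod_ne_zero_iff.mpr fun i _ => ?_
    positivity
  exact h2 (by exact_mod_cast this)

lemma one_notin_pqIdeal (p : ℕ) (hp : p.Prime) : (1 : Zq) ∉ pqIdeal p := by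
  intro h
  rw [pqIdeal, Ideal.mem_span_pair] at h
  obtain ⟨a, b, hab⟩ := h
  haveI := Fact.mk hp
  have := congrArg (Polynomial.eval₂ (Int.castRingHom (ZMod p)) 1) hab
  simp only [Polynomial.eval₂_add, Polynomial.eval₂_mul, Polynomial.eval₂_C,
    Polynomial.eval₂_sub, Polynomial.eval₂_X, Polynomial.eval₂_one] at this
  rw [sub_self, mul_zero, add_zero] at this
  have hz : (Int.castRingHom (ZMod p)) ((p : ℕ) : ℤ) = 0 := by
    simp only [Int.coe_castRingHom, Int.cast_natCast, ZMod.natCast_self]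
  rw [hz, mul_zero] at this
  exact one_ne_zero this.symm

lemma InLoc_iota (p : ℕ) (hp : p.Prime) (a : Zq) : InLoc p (ι a) :=
  ⟨a, 1, one_notin_pqIdeal p hp, by rw [map_one, mul_one]⟩

/-- the map `ℤ[q][x][ξ] → ℚ(q)[x][ξ]`. -/
def Θ : Zqxx →+* Polynomial (Polynomial Qq) :=
  Polynomial.mapRingHom (Polynomial.mapRingHom ι)

lemma Theta_Tz (k : ℕ) :
    Θ (Tz k) = ∏ j ∈ Finset.range k,
      (X + C (Polynomial.C (1 - qQ ^ j) * Polynomial.X)) := by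
  rw [Tz, map_prod]
  refine Finset.prod_congr rfl fun j _ => ?_
  rw [Θ]
  simp only [Polynomial.coe_mapRingHom, Polynomial.map_add, Polynomial.map_X,
    Polynomial.map_C, Polynomial.map_mul, Polynomial.map_sub, Polynomial.map_one,
    Polynomial.map_pow]
  rw [map_sub, map_one, map_pow, qQ]

lemma Theta_PZ (a N : ℕ) :
    Θ (PZpoly a N) = ∏ j ∈ Finset.range N,
      (((X : Polynomial (Polynomial Qq)) + C Polynomial.X) ^ a -
        C (Polynomial.C (qQ ^ (j * a)) * Polynomial.X ^ a)) := by
  rw [PZpoly, map_prod]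
  refine Finset.prod_congr rfl fun j _ => ?_
  rw [Θ]
  simp only [Polynomial.coe_mapRingHom, Polynomial.map_sub, Polynomial.map_pow,
    Polynomial.map_add, Polynomial.map_X, Polynomial.map_C, Polynomial.map_mul]
  rw [map_pow, qQ]

end assembly
end S9

open S9

/-- For `0 ≤ s < p^n`, the twisted power `(φ^m(ξ))^{(p^n l + s)_{q^{p^m}},(1-q^{p^m})x^{p^m}}`
lies in `(p)_{q^{p^{m+n-1}}}^l ⬝ S`. -/
theorem stmt9 (p : ℕ) (hp : p.Prime) (m n l s : ℕ) (hn : 0 < n) (hs : s < p ^ n) :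
    ∃ y ∈ Sset p m,
      (∏ j ∈ Finset.range (p ^ n * l + s),
          (((X : Polynomial (Polynomial Qq)) + C Polynomial.X) ^ p ^ m -
            C (Polynomial.C (qQ ^ (j * p ^ m)) * Polynomial.X ^ p ^ m)))
        = C (Polynomial.C (ι (qInt (p ^ (m + n - 1)) p))) ^ l * y := by
  classical
  have hι : Function.Injective ι := IsFractionRing.injective Zq Qq
  set N : ℕ := p ^ n * l + s with hNdef
  set D : ℕ := (PZpoly (p ^ m) N).natDegree with hD
  obtain ⟨G, hG⟩ := exists_expansion D (PZpoly (p ^ m) N) le_rfl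
  have hdvd := main_dvd p m n hp hn l s N D rfl hs G hG
  -- quotient polynomials
  have hWex : ∀ k, ∃ Wk : Zqx, k ≤ D →
      Polynomial.C (qFact (p ^ m) (k / p ^ m)) * G k
        = Polynomial.C ((qInt (p ^ (m + n - 1)) p) ^ l) * Wk := by
    intro k
    by_cases hk : k ≤ D
    · have hdd : Polynomial.C ((qInt (p ^ (m + n - 1)) p) ^ l) ∣
          Polynomial.C (qFact (p ^ m) (k / p ^ m)) * G k := by
        rw [Polynomial.C_dvd_iff_dvd_coeff]
        intro i
        rw [Polynomial.coeff_C_mul]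
        exact hdvd k hk i
      obtain ⟨Wk, hWk⟩ := hdd
      exact ⟨Wk, fun _ => hWk⟩
    · exact ⟨0, fun h => absurd h hk⟩
  choose W hW using hWex
  refine ⟨∑ k ∈ Finset.range (D + 1), C (Polynomial.map ι (W k)) * tdpoly p m k, ?_, ?_⟩
  · -- membership in Sset
    refine Submodule.sum_mem _ fun k _ => ?_
    have hexp : Polynomial.map ι (W k)
        = ∑ t ∈ Finset.range ((Polynomial.map ι (W k)).natDegree + 1),
            Polynomial.C (ι ((W k).coeff t)) * Polynomial.X ^ t := by
      conv_lhs => rw [Polynomial.as_sum_range (Polynomial.map ι (W k))]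
      exact Finset.sum_congr rfl fun t _ => by
        rw [Polynomial.coeff_map, Polynomial.C_mul_X_pow_eq_monomial]
    rw [hexp, map_sum, Finset.sum_mul]
    refine Submodule.sum_mem _ fun t _ => ?_
    refine Submodule.subset_span ?_
    exact ⟨k, t, ι ((W k).coeff t), InLoc_iota p hp _, rfl⟩
  · -- the identity
    have hγ0 : ∀ k : ℕ, ι (qFact (p ^ m) (k / p ^ m)) ≠ 0 := by
      intro k h
      exact qFact_ne_zero (p ^ m) (k / p ^ m) (hι (by rw [h, map_zero]))
    have key : ∀ k ∈ Finset.range (D + 1),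
        C (Polynomial.C (ι (qInt (p ^ (m + n - 1)) p))) ^ l
            * (C (Polynomial.map ι (W k)) * tdpoly p m k)
          = C (Polynomial.map ι (G k)) * ∏ j ∈ Finset.range k,
              (X + C (Polynomial.C (1 - qQ ^ j) * Polynomial.X)) := by
      intro k hk
      rw [Finset.mem_range] at hk
      have hk' : k ≤ D := by omega
      have hmapW : Polynomial.C (ι (qFact (p ^ m) (k / p ^ m))) * Polynomial.map ι (G k)
          = Polynomial.C (ι ((qInt (p ^ (m + n - 1)) p) ^ l)) * Polynomial.map ι (W k) := by
        have := congrArg (Polynomial.map ι) (hW k hk')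
        rwa [Polynomial.map_mul, Polynomial.map_mul, Polynomial.map_C, Polynomial.map_C]
          at this
      rw [tdpoly]
      have hinner : Polynomial.C (ι (qFact (p ^ m) (k / p ^ m)))
          * Polynomial.C ((ι (qFact (p ^ m) (k / p ^ m)))⁻¹) = 1 := by
        rw [← Polynomial.C_mul, mul_inv_cancel₀ (hγ0 k), Polynomial.C_1]
      have hpowι : (ι (qInt (p ^ (m + n - 1)) p)) ^ l = ι ((qInt (p ^ (m + n - 1)) p) ^ l) :=
        (map_pow ι _ l).symm
      have h1 : C (Polynomial.C (ι (qInt (p ^ (m + n - 1)) p))) ^ l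
            * C (Polynomial.map ι (W k))
            * C (Polynomial.C ((ι (qFact (p ^ m) (k / p ^ m)))⁻¹))
          = C (Polynomial.map ι (G k)) := by
        rw [← Polynomial.C_pow, ← Polynomial.C_mul, ← Polynomial.C_mul]
        congr 1
        rw [← Polynomial.C_pow, hpowι, ← hmapW]
        calc Polynomial.C (ι (qFact (p ^ m) (k / p ^ m))) * Polynomial.map ι (G k)
              * Polynomial.C ((ι (qFact (p ^ m) (k / p ^ m)))⁻¹)
            = (Polynomial.C (ι (qFact (p ^ m) (k / p ^ m)))
                * Polynomial.C ((ι (qFact (p ^ m) (k / p ^ m)))⁻¹))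
              * Polynomial.map ι (G k) := by ring
          _ = Polynomial.map ι (G k) := by rw [hinner, one_mul]
      calc C (Polynomial.C (ι (qInt (p ^ (m + n - 1)) p))) ^ l
            * (C (Polynomial.map ι (W k))
              * ((∏ j ∈ Finset.range k, (X + C (Polynomial.C (1 - qQ ^ j) * Polynomial.X)))
                * C (Polynomial.C ((ι (qFact (p ^ m) (k / p ^ m)))⁻¹))))
          = (C (Polynomial.C (ι (qInt (p ^ (m + n - 1)) p))) ^ l
              * C (Polynomial.map ι (W k))
              * C (Polynomial.C ((ι (qFact (p ^ m) (k / p ^ m)))⁻¹)))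
            * ∏ j ∈ Finset.range k, (X + C (Polynomial.C (1 - qQ ^ j) * Polynomial.X)) := by
            ring
        _ = C (Polynomial.map ι (G k))
            * ∏ j ∈ Finset.range k, (X + C (Polynomial.C (1 - qQ ^ j) * Polynomial.X)) := by
            rw [h1]
    calc (∏ j ∈ Finset.range (p ^ n * l + s),
            (((X : Polynomial (Polynomial Qq)) + C Polynomial.X) ^ p ^ m -
              C (Polynomial.C (qQ ^ (j * p ^ m)) * Polynomial.X ^ p ^ m)))
        = Θ (PZpoly (p ^ m) N) := (Theta_PZ (p ^ m) N).symm
      _ = ∑ k ∈ Finset.range (D + 1), C (Polynomial.map ι (G k))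
            * ∏ j ∈ Finset.range k, (X + C (Polynomial.C (1 - qQ ^ j) * Polynomial.X)) := by
          rw [hG, map_sum]
          refine Finset.sum_congr rfl fun k _ => ?_
          rw [map_mul, Theta_Tz]
          congr 1
          rw [Θ]
          simp only [Polynomial.coe_mapRingHom, Polynomial.map_C]
      _ = C (Polynomial.C (ι (qInt (p ^ (m + n - 1)) p))) ^ l
            * ∑ k ∈ Finset.range (D + 1), C (Polynomial.map ι (W k)) * tdpoly p m k := by
          rw [Finset.mul_sum]
          exact (Finset.sum_congr rfl key).symm
end
end

section
/- Let p be a prime and m ∈ ℕ. Let k, l, l' be natural numbers with p^m dividing k and l' ≤ l. Then in ℚ(q) the identity ⟨l choose l'⟩_{(m),q} · ⟨k+l choose k⟩_{(m),q} = ⟨k+l choose l'⟩_{(m),q} · ⟨k+l−l' choose k⟩_{(m),q} holds. -/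
noncomputable section

open Polynomial

lemma qFact_ne_zero (a n : ℕ) : qFact a n ≠ 0 := by
  unfold qFact
  rw [Finset.prod_ne_zero_iff]
  intro i _ hzero
  have := congrArg (Polynomial.eval 1) hzero
  simp [qInt, Polynomial.eval_finset_sum] at this
  omega

lemma ιqFact_ne_zero (a n : ℕ) : ι (qFact a n) ≠ 0 := by
  intro h
  exact qFact_ne_zero a n (IsFractionRing.injective Zq Qq (by simpa [ι] using h))

set_option synthInstance.maxHeartbeats 1000000 in
set_option maxHeartbeats 2000000 in
/-- For `p^m ∣ k` and `l' ≤ l`: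
`⟨l choose l'⟩_{(m),q} ⬝ ⟨k+l choose k⟩_{(m),q}
  = ⟨k+l choose l'⟩_{(m),q} ⬝ ⟨k+l-l' choose k⟩_{(m),q}`. -/
theorem stmt14 (p : ℕ) (hp : p.Prime) (m k l l' : ℕ) (hk : p ^ m ∣ k) (h : l' ≤ l) :
    angleC p m l l' * angleC p m (k + l) k =
      angleC p m (k + l) l' * angleC p m (k + l - l') k := by
  obtain ⟨r, rfl⟩ := hk
  have hP0 : 0 < p ^ m := pow_pos hp.pos m
  have e1 : p ^ m * r + l - l' = p ^ m * r + (l - l') := Nat.add_sub_assoc h _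
  have e2 : p ^ m * r + l - p ^ m * r = l := by omega
  have e3 : p ^ m * r + (l - l') - p ^ m * r = l - l' := by omega
  have d1 : (p ^ m * r + l) / p ^ m = r + l / p ^ m := Nat.mul_add_div hP0 r l
  have d2 : (p ^ m * r + (l - l')) / p ^ m = r + (l - l') / p ^ m :=
    Nat.mul_add_div hP0 r (l - l')
  have d3 : p ^ m * r / p ^ m = r := Nat.mul_div_cancel_left r hP0
  simp only [angleC, qBinomF, braceC, e1, e2, e3, d1, d2, d3]
  have a1 := ιqFact_ne_zero 1 l
  have a2 := ιqFact_ne_zero 1 l'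
  have a3 := ιqFact_ne_zero 1 (l - l')
  have a4 := ιqFact_ne_zero 1 (p ^ m * r + l)
  have a5 := ιqFact_ne_zero 1 (p ^ m * r)
  have a6 := ιqFact_ne_zero 1 (p ^ m * r + (l - l'))
  have b1 := ιqFact_ne_zero (p ^ m) (l / p ^ m)
  have b2 := ιqFact_ne_zero (p ^ m) (l' / p ^ m)
  have b3 := ιqFact_ne_zero (p ^ m) ((l - l') / p ^ m)
  have b4 := ιqFact_ne_zero (p ^ m) r
  have b5 := ιqFact_ne_zero (p ^ m) (r + l / p ^ m)
  have b6 := ιqFact_ne_zero (p ^ m) (r + (l - l') / p ^ m)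
  field_simp
end
end
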